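/- For any Dual FOND problem P and any policy π: π solves P if and only if for every non-goal state s reachable by π, π(s) is defined and applicable in s, and s is terminating per the inductive Dual-FOND termination definition. -/

import Mathlib

namespace FondPaper

/-- A FOND model: initial state, goal states, and transition function
`F a s` giving the set of possible successor states of action `a` in state `s`. -/
structure FOND (S A : Type) where
  init : S
  goal : Set S
  F : A → S → Set S

variable {S A V : Type}

/-- Action `a` is applicable in `s` iff it has some successor. -/
def FOND.Applicable (P : FOND S A) (a : A) (s : S) : Prop := (P.F a s).Nonempty

/-- A policy is a partial function mapping non-goal states into actions. -/
def IsPolicy (P : FOND S A) (π : S → Option A) : Prop := ∀ s ∈ P.goal, π s = none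

/-- A (finite or infinite) trajectory: `len = some n` means the trajectory is
`states 0, …, states n`; `len = none` means it is infinite. -/
structure Traj (S : Type) where
  states : ℕ → S
  len : Option ℕ

/-- Index `i` is within the trajectory. -/
def Traj.Inside (τ : Traj S) (i : ℕ) : Prop := ∀ n, τ.len = some n → i ≤ n

/-- There is a step from index `i` to `i+1` in the trajectory. -/
def Traj.HasStep (τ : Traj S) (i : ℕ) : Prop := ∀ n, τ.len = some n → i < n

/-- `τ` is a π-trajectory of `P`. -/
def IsTraj (P : FOND S A) (π : S → Option A) (τ : Traj S) : Prop :=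
  τ.states 0 = P.init ∧
  ∀ i, τ.HasStep i → ∃ a, π (τ.states i) = some a ∧ τ.states (i + 1) ∈ P.F a (τ.states i)

/-- Maximal trajectory: infinite, or finite ending in the first goal state,
or in a state where the policy is undefined or prescribes an inapplicable action. -/
def MaximalTraj (P : FOND S A) (π : S → Option A) (τ : Traj S) : Prop :=
  τ.len = none ∨
  ∃ n, τ.len = some n ∧
    ((τ.states n ∈ P.goal ∧ ∀ i < n, τ.states i ∉ P.goal) ∨
     π (τ.states n) = none ∨
     (∃ a, π (τ.states n) = some a ∧ ¬ P.Applicable a (τ.states n)))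

/-- The trajectory reaches a goal state. -/
def ReachesGoal (P : FOND S A) (τ : Traj S) : Prop :=
  ∃ i, τ.Inside i ∧ τ.states i ∈ P.goal

/-- `s` is recurrent in `τ`: the trajectory is infinite and `s` occurs infinitely often. -/
def RecurrentIn (τ : Traj S) (s : S) : Prop :=
  τ.len = none ∧ {i | τ.states i = s}.Infinite

/-- One policy step: `s'` is a possible successor of `s` under the policy. -/
def PStep (P : FOND S A) (π : S → Option A) (s s' : S) : Prop :=
  ∃ a, π s = some a ∧ s' ∈ P.F a s

/-- The policy reaches `s'` from `s`. -/
def ReachesFrom (P : FOND S A) (π : S → Option A) : S → S → Prop :=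
  Relation.ReflTransGen (PStep P π)

/-- `s` is reached by the policy: some finite π-trajectory ends at `s`. -/
def ReachedBy (P : FOND S A) (π : S → Option A) (s : S) : Prop :=
  ∃ τ : Traj S, IsTraj P π τ ∧ ∃ n, τ.len = some n ∧ τ.states n = s

/-- Strong-cyclic solution: a goal is reachable via π from every state reached by π. -/
def StrongCyclic (P : FOND S A) (π : S → Option A) : Prop :=
  ∀ s, ReachedBy P π s → ∃ g ∈ P.goal, ReachesFrom P π s g

/-- Strong solution: every maximal π-trajectory reaches a goal state. -/
def Strong (P : FOND S A) (π : S → Option A) : Prop :=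
  ∀ τ : Traj S, IsTraj P π τ → MaximalTraj P π τ → ReachesGoal P τ

/-- Fairness when all actions are fair: each recurrent state is immediately
followed by each of its possible successors infinitely often.
(Finite trajectories have no recurrent states, hence are fair.) -/
def FairAll (P : FOND S A) (π : S → Option A) (τ : Traj S) : Prop :=
  ∀ s, RecurrentIn τ s → ∀ a, π s = some a → ∀ s' ∈ P.F a s,
    {i | τ.states i = s ∧ τ.states (i + 1) = s'}.Infinite

/-- The policy is acyclic: no π-trajectory visits the same state more than once. -/
def AcyclicPolicy (P : FOND S A) (π : S → Option A) : Prop :=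
  ∀ τ : Traj S, IsTraj P π τ → ∀ i j, τ.Inside i → τ.Inside j →
    τ.states i = τ.states j → i = j

/-- The non-deterministic actions of `P`: those with at least two possible
successors in some state. -/
def NonDetActs (P : FOND S A) : Set A :=
  {a | ∃ s s₁ s₂, s₁ ∈ P.F a s ∧ s₂ ∈ P.F a s ∧ s₁ ≠ s₂}

/-- The occurrence of the action `π s` at recurrent state `s` of trajectory `τ`
is fair: for some constraint `(A, B) ∈ C`, `π s ∈ A` and actions from `B`
occur only finitely often along `τ`. -/
def FairOcc (C : Set (Set A × Set A)) (π : S → Option A) (τ : Traj S) (s : S) : Prop :=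
  ∃ c ∈ C, (∃ a, π s = some a ∧ a ∈ c.1) ∧
    ∀ b ∈ c.2, {i | π (τ.states i) = some b}.Finite

/-- `τ` is fair for the FOND+ problem `⟨P, C⟩`. -/
def FairPlus (P : FOND S A) (C : Set (Set A × Set A)) (π : S → Option A) (τ : Traj S) : Prop :=
  ∀ s, RecurrentIn τ s → FairOcc C π τ s → ∀ a, π s = some a → ∀ s' ∈ P.F a s,
    {i | τ.states i = s ∧ τ.states (i + 1) = s'}.Infinite

/-- `π` solves the FOND+ problem `⟨P, C⟩`. -/
def SolvesPlus (P : FOND S A) (C : Set (Set A × Set A)) (π : S → Option A) : Prop :=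
  ∀ τ : Traj S, IsTraj P π τ → MaximalTraj P π τ → FairPlus P C π τ → ReachesGoal P τ

/-- Well-formed set of fairness constraints: finite, each `A`-part a set of
non-deterministic actions and each `B`-part disjoint from the `A`-part. -/
def WellFormedC (P : FOND S A) (C : Set (Set A × Set A)) : Prop :=
  C.Finite ∧ ∀ c ∈ C, c.1 ⊆ NonDetActs P ∧ Disjoint c.1 c.2

/-- A cycle on `s` w.r.t. policy `π`: a sequence `s = t 0, …, t k = s` with `k ≥ 1`,
each `t i` (`i < k`) non-goal with `π` defined and `t (i+1)` a possible successor. -/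
def CycleOn (P : FOND S A) (π : S → Option A) (s : S) (t : ℕ → S) (k : ℕ) : Prop :=
  1 ≤ k ∧ t 0 = s ∧ t k = s ∧
    ∀ i < k, t i ∉ P.goal ∧ ∃ a, π (t i) = some a ∧ t (i + 1) ∈ P.F a (t i)

/-- `s` is fair-for-`T`: for some `(A, B) ∈ C`, `π s ∈ A` and every cycle on `s`
containing a state where `π` prescribes a `B`-action also contains a state in `T`. -/
def FairFor (P : FOND S A) (C : Set (Set A × Set A)) (π : S → Option A)
    (T : Set S) (s : S) : Prop :=
  ∃ c ∈ C, (∃ a, π s = some a ∧ a ∈ c.1) ∧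
    ∀ t k, CycleOn P π s t k →
      (∃ i ≤ k, ∃ b, π (t i) = some b ∧ b ∈ c.2) → ∃ j ≤ k, t j ∈ T

/-- `T` is closed under the FOND+ termination rules. -/
def TermClosed (P : FOND S A) (C : Set (Set A × Set A)) (π : S → Option A) (T : Set S) : Prop :=
  P.goal ⊆ T ∧
  (∀ s a, π s = some a → FairFor P C π T s → (∃ s' ∈ P.F a s, s' ∈ T) → s ∈ T) ∧
  (∀ s a, π s = some a → ¬ FairFor P C π T s → (P.F a s).Nonempty →
    (∀ s' ∈ P.F a s, s' ∈ T) → s ∈ T)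

/-- `s` is terminating for `π` in `⟨P, C⟩`: it belongs to the least set closed
under the FOND+ termination rules. -/
def Terminating (P : FOND S A) (C : Set (Set A × Set A)) (π : S → Option A) (s : S) : Prop :=
  ∀ T : Set S, TermClosed P C π T → s ∈ T

/-- The operator `Φ` of the FOND+ termination computation. -/
def Phi (P : FOND S A) (C : Set (Set A × Set A)) (π : S → Option A) (T : Set S) : Set S :=
  P.goal ∪
  {s | ∃ a, π s = some a ∧ FairFor P C π T s ∧ ∃ s' ∈ P.F a s, s' ∈ T} ∪
  {s | ∃ a, π s = some a ∧ (P.F a s).Nonempty ∧ P.F a s ⊆ T}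

/-- The policy graph of `P` and `π`: edges `(s, s')` for non-goal reachable `s`
with `π s` defined and `s'` a possible successor. -/
def PolicyEdges (P : FOND S A) (π : S → Option A) : Set (S × S) :=
  {e | ReachesFrom P π P.init e.1 ∧ e.1 ∉ P.goal ∧ PStep P π e.1 e.2}

/-- Path (of length ≥ 0) in a graph given by its edge set. -/
def GPath (G : Set (S × S)) : S → S → Prop :=
  Relation.ReflTransGen (fun x y => (x, y) ∈ G)

/-- Edge `e = (s, s')` of `G` is removable by Sieve: `π s` decrements some
variable `x` not incremented at any state lying on a path in `G` from `s'` back to `s`. -/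
def Removable (π : S → Option A) (decs incs : A → Set V) (G : Set (S × S)) (e : S × S) : Prop :=
  e ∈ G ∧ ∃ x : V, (∃ a, π e.1 = some a ∧ x ∈ decs a) ∧
    ∀ w, GPath G e.2 w → GPath G w e.1 → ∀ a, π w = some a → x ∉ incs a

/-- One Sieve edge-removal step. -/
def SieveStep (π : S → Option A) (decs incs : A → Set V) (G G' : Set (S × S)) : Prop :=
  ∃ e, Removable π decs incs G e ∧ G' = G \ {e}

/-- Graph acyclicity: no nonempty path from a state back to itself. -/
def GAcyclic (G : Set (S × S)) : Prop :=
  ∀ s s', (s, s') ∈ G → ¬ GPath G s' s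

/-- A cycle on `s` in a graph given by its edge set. -/
def ECycleOn (E : Set (S × S)) (s : S) (t : ℕ → S) (k : ℕ) : Prop :=
  1 ≤ k ∧ t 0 = s ∧ t k = s ∧ ∀ i < k, (t i, t (i + 1)) ∈ E

/-- `T` is closed under the QNP termination rules. -/
def QNPClosed (P : FOND S A) (π : S → Option A) (decs incs : A → Set V) (T : Set S) : Prop :=
  ∀ s, ReachesFrom P π P.init s →
    ((¬ ∃ t k, ECycleOn (PolicyEdges P π) s t k) ∨
     (∀ t k, ECycleOn (PolicyEdges P π) s t k → ∃ j ≤ k, t j ∈ T) ∨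
     (∃ x, (∃ a, π s = some a ∧ x ∈ decs a) ∧
        ∀ t k, ECycleOn (PolicyEdges P π) s t k →
          (∃ i ≤ k, ∃ a, π (t i) = some a ∧ x ∈ incs a) → ∃ j ≤ k, t j ∈ T)) →
    s ∈ T

/-- `s` is QNP-terminating: it belongs to the least set closed under the QNP
termination rules. -/
def QNPTerm (P : FOND S A) (π : S → Option A) (decs incs : A → Set V) (s : S) : Prop :=
  ∀ T : Set S, QNPClosed P π decs incs T → s ∈ T

/-- `T` is closed under the Dual-FOND termination rules. -/
def DualClosed (P : FOND S A) (fair : A → Prop) (π : S → Option A) (T : Set S) : Prop :=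
  P.goal ⊆ T ∧
  (∀ s a, π s = some a → fair a → (∃ s' ∈ P.F a s, s' ∈ T) → s ∈ T) ∧
  (∀ s a, π s = some a → ¬ fair a → (P.F a s).Nonempty →
    (∀ s' ∈ P.F a s, s' ∈ T) → s ∈ T)

/-- `s` is Dual-FOND terminating. -/
def DualTerm (P : FOND S A) (fair : A → Prop) (π : S → Option A) (s : S) : Prop :=
  ∀ T : Set S, DualClosed P fair π T → s ∈ T

/-- `π` solves the Dual FOND problem `(P, fair)`. -/
def SolvesDual [Fintype S] (P : FOND S A) (fair : A → Prop) (π : S → Option A) : Prop :=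
  (∀ s, ReachedBy P π s → s ∉ P.goal → ∃ a, π s = some a ∧ (P.F a s).Nonempty) ∧
  ∃ d : S → ℕ,
    (∀ s, ReachedBy P π s → d s ≤ Fintype.card S) ∧
    (∀ s, ReachedBy P π s → s ∈ P.goal → d s = 0) ∧
    (∀ s a, ReachedBy P π s → π s = some a →
      (fair a → ∃ s' ∈ P.F a s, d s' < d s) ∧
      (¬ fair a → ∀ s' ∈ P.F a s, d s' < d s))

end FondPaper

open FondPaper

/-!
A ranking `d` certifies termination by strong induction on `d`: every closed set contains all
reachable states. Conversely, the least closed set is the limit of the stages `Φⁿ(∅)` of the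
one-step operator `Φ = DualPhi`, which stabilise because `S` is finite. Ranking a state by the
size of the last stage not containing it makes every policy step decrease the ranking where the
termination rules require it, and keeps it bounded by `|S|`.
-/

theorem Monotone.ncard_lt_ncard {α : Type*} [Finite α] {T : ℕ → Set α} (hT : Monotone T)
    {x : α} {k m : ℕ} (hm : x ∈ T m) (hk : x ∉ T k) : (T k).ncard < (T m).ncard := by
  refine Set.ncard_lt_ncard ⟨?_, fun h => hk (h hm)⟩
  rcases le_total k m with hkm | hmk
  · exact hT hkm
  · exact absurd (hT hmk hm) hk

theorem Monotone.exists_apply_succ_eq {β : Type*} [PartialOrder β] [WellFoundedGT β] {T : ℕ → β}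
    (hT : Monotone T) : ∃ N, T (N + 1) = T N := by
  obtain ⟨N, hN⟩ := WellFoundedGT.monotone_chain_condition ⟨T, hT⟩
  exact ⟨N, (hN (N + 1) N.le_succ).symm⟩

namespace FondPaper

variable {S A : Type}

theorem ReachedBy.of_pStep {P : FOND S A} {π : S → Option A} {s s' : S}
    (hs : ReachedBy P π s) (hstep : PStep P π s s') : ReachedBy P π s' := by
  obtain ⟨τ, ⟨h0, hτ⟩, n, hlen, rfl⟩ := hs
  refine ⟨⟨fun i => if i ≤ n then τ.states i else s', some (n + 1)⟩, ⟨by simpa using h0, ?_⟩,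
    n + 1, rfl, by simp⟩
  intro i hi
  obtain hin | rfl := Nat.lt_or_eq_of_le (Nat.lt_succ_iff.mp (hi _ rfl))
  · simpa [hin.le, Nat.succ_le_of_lt hin] using
      hτ i fun m hm => by cases hlen.symm.trans hm; exact hin
  · simpa [PStep] using hstep

theorem SolvesDual.dualTerm [Fintype S] {P : FOND S A} {fair : A → Prop} {π : S → Option A}
    (h : SolvesDual P fair π) {s : S} (hs : ReachedBy P π s) : DualTerm P fair π s := by
  obtain ⟨happ, d, -, -, hd⟩ := h
  rintro T ⟨hgoal, hfair, hadv⟩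
  induction s using (InvImage.wf d wellFounded_lt).induction with
  | h s ih =>
    by_cases hg : s ∈ P.goal
    · exact hgoal hg
    obtain ⟨a, ha, hne⟩ := happ s hs hg
    have hnext : ∀ s' ∈ P.F a s, d s' < d s → s' ∈ T := fun s' hs' hlt =>
      ih s' hlt (hs.of_pStep ⟨a, ha, hs'⟩)
    by_cases hf : fair a
    · obtain ⟨s', hs', hlt⟩ := (hd s a hs ha).1 hf
      exact hfair s a ha hf ⟨s', hs', hnext s' hs' hlt⟩
    · exact hadv s a ha hf hne fun s' hs' => hnext s' hs' ((hd s a hs ha).2 hf s' hs')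

section Stages

variable (P : FOND S A) (fair : A → Prop) (π : S → Option A)

def DualPhi (T : Set S) : Set S :=
  P.goal ∪ {s | ∃ a, π s = some a ∧
    (fair a ∧ (∃ s' ∈ P.F a s, s' ∈ T) ∨ ¬ fair a ∧ (P.F a s).Nonempty ∧ P.F a s ⊆ T)}

theorem DualPhi_mono : Monotone (DualPhi P fair π) := by
  rintro T T' hT s (hg | ⟨a, ha, ⟨hf, s', hs', hT'⟩ | ⟨hf, hne, hsub⟩⟩)
  · exact Or.inl hg
  · exact Or.inr ⟨a, ha, Or.inl ⟨hf, s', hs', hT hT'⟩⟩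
  · exact Or.inr ⟨a, ha, Or.inr ⟨hf, hne, hsub.trans hT⟩⟩

theorem dualClosed_of_DualPhi_subset {T : Set S} (hT : DualPhi P fair π T ⊆ T) :
    DualClosed P fair π T :=
  ⟨fun _ hs => hT (Or.inl hs),
   fun _ a ha hf ⟨s', hs', hT'⟩ => hT (Or.inr ⟨a, ha, Or.inl ⟨hf, s', hs', hT'⟩⟩),
   fun _ a ha hf hne hall => hT (Or.inr ⟨a, ha, Or.inr ⟨hf, hne, hall⟩⟩)⟩

def dualStage (n : ℕ) : Set S := (DualPhi P fair π)^[n] ∅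

theorem dualStage_zero : dualStage P fair π 0 = ∅ := rfl

theorem dualStage_succ (n : ℕ) :
    dualStage P fair π (n + 1) = DualPhi P fair π (dualStage P fair π n) :=
  Function.iterate_succ_apply' _ _ _

theorem goal_subset_dualStage_one : P.goal ⊆ dualStage P fair π 1 := by
  rw [dualStage_succ]
  exact fun _ hg => Or.inl hg

theorem dualStage_mono : Monotone (dualStage P fair π) :=
  (DualPhi_mono P fair π).monotone_iterate_of_le_map (Set.empty_subset _)

theorem exists_dualClosed_dualStage [Finite S] :
    ∃ N, DualClosed P fair π (dualStage P fair π N) := by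
  obtain ⟨N, hN⟩ := (dualStage_mono P fair π).exists_apply_succ_eq
  exact ⟨N, dualClosed_of_DualPhi_subset P fair π (by rw [← dualStage_succ, hN])⟩

noncomputable def dualRank (s : S) : ℕ := sInf {n | s ∈ dualStage P fair π (n + 1)}

theorem notMem_dualStage_dualRank (s : S) : s ∉ dualStage P fair π (dualRank P fair π s) := by
  intro h
  cases hk : dualRank P fair π s with
  | zero => rw [hk, dualStage_zero] at h; exact h
  | succ k =>
    rw [hk] at h
    have : dualRank P fair π s ≤ k := Nat.sInf_le h
    omega

theorem mem_dualStage_succ_dualRank {s : S} {n : ℕ} (h : s ∈ dualStage P fair π (n + 1)) :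
    s ∈ dualStage P fair π (dualRank P fair π s + 1) :=
  Nat.sInf_mem (s := {n | s ∈ dualStage P fair π (n + 1)}) ⟨n, h⟩

noncomputable def dualRanking (s : S) : ℕ := (dualStage P fair π (dualRank P fair π s)).ncard

theorem dualRanking_lt [Finite S] {s : S} {k : ℕ} (h : s ∈ dualStage P fair π k) :
    dualRanking P fair π s < (dualStage P fair π k).ncard :=
  (dualStage_mono P fair π).ncard_lt_ncard h (notMem_dualStage_dualRank P fair π s)

theorem dualRanking_eq_zero_of_mem_goal {s : S} (hg : s ∈ P.goal) : dualRanking P fair π s = 0 := by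
  have : dualRank P fair π s = 0 :=
    Nat.sInf_eq_zero.mpr (Or.inl (goal_subset_dualStage_one P fair π hg))
  simp [dualRanking, this, dualStage_zero]

theorem dualRanking_step [Finite S] {s : S} {a : A} {n : ℕ}
    (hs : s ∈ dualStage P fair π (n + 1)) (hg : s ∉ P.goal) (ha : π s = some a) :
    (fair a → ∃ s' ∈ P.F a s, dualRanking P fair π s' < dualRanking P fair π s) ∧
      (¬ fair a → ∀ s' ∈ P.F a s, dualRanking P fair π s' < dualRanking P fair π s) := by
  have hmem := mem_dualStage_succ_dualRank P fair π hs
  rw [dualStage_succ] at hmem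
  rcases hmem with hg' | ⟨a', ha', hstep⟩
  · exact absurd hg' hg
  obtain rfl : a' = a := Option.some_injective _ (ha'.symm.trans ha)
  rcases hstep with ⟨hf, s', hs', hlt⟩ | ⟨hf, -, hsub⟩
  · exact ⟨fun _ => ⟨s', hs', dualRanking_lt P fair π hlt⟩, absurd hf⟩
  · exact ⟨fun h => absurd h hf, fun _ s' hs' => dualRanking_lt P fair π (hsub hs')⟩

end Stages

theorem solvesDual_of_forall_dualTerm [Fintype S] {P : FOND S A} {fair : A → Prop}
    {π : S → Option A} (hπ : IsPolicy P π)
    (H : ∀ s, ReachedBy P π s → s ∉ P.goal →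
      (∃ a, π s = some a ∧ (P.F a s).Nonempty) ∧ DualTerm P fair π s) :
    SolvesDual P fair π := by
  obtain ⟨N, hN⟩ := exists_dualClosed_dualStage P fair π
  have hstaged : ∀ s, ReachedBy P π s → s ∈ dualStage P fair π (N + 1) := by
    intro s hs
    by_cases hg : s ∈ P.goal
    · exact dualStage_mono P fair π (Nat.le_add_left 1 N) (goal_subset_dualStage_one P fair π hg)
    · exact dualStage_mono P fair π N.le_succ ((H s hs hg).2 _ hN)
  refine ⟨fun s hs hg => (H s hs hg).1, dualRanking P fair π,
    fun _ _ => (Set.ncard_le_card _).trans_eq Nat.card_eq_fintype_card,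
    fun _ _ hg => dualRanking_eq_zero_of_mem_goal P fair π hg,
    fun s a hs ha => dualRanking_step P fair π (hstaged s hs) ?_ ha⟩
  intro hg
  simp [hπ s hg] at ha

end FondPaper

theorem stmt10_general (S A : Type) [Fintype S] (P : FOND S A)
    (π : S → Option A) (hπ : IsPolicy P π) (fair : A → Prop) :
    SolvesDual P fair π ↔
      ∀ s, ReachedBy P π s → s ∉ P.goal →
        (∃ a, π s = some a ∧ (P.F a s).Nonempty) ∧ DualTerm P fair π s :=
  ⟨fun h s hs hg => ⟨h.1 s hs hg, h.dualTerm hs⟩, solvesDual_of_forall_dualTerm hπ⟩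

/-- π solves the Dual FOND problem P iff for every non-goal state s
reachable by π, π(s) is defined and applicable in s and s is Dual-FOND terminating. -/
theorem stmt10 (S A : Type) [Fintype S] [Finite A] (P : FOND S A) (hgoal : P.goal.Nonempty)
    (π : S → Option A) (hπ : IsPolicy P π) (fair : A → Prop) :
    SolvesDual P fair π ↔
      ∀ s, ReachedBy P π s → s ∉ P.goal →
        (∃ a, π s = some a ∧ (P.F a s).Nonempty) ∧ DualTerm P fair π s :=
  stmt10_general S A P π hπ fair
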